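/- With the caterpillar construction and the additional hypothesis |L| > m·|a_r|: there exists an optimal solution of the tree instance T in which all internal vertices r_1, …, r_m are assigned one identical permutation p of A, and in p every element of a_r occurs before every element of L (so the first |a_r| entries of p are exactly the elements of a_r). -/

import Mathlib

/-- Length of the longest common prefix of two lists. -/
def lcp {α : Type*} [DecidableEq α] : List α → List α → ℕ
  | a :: p, b :: q => if a = b then lcp p q + 1 else 0
  | _, _ => 0

/-- `p` is a permutation of the finite set `s`: a duplicate-free list whose
set of elements is exactly `s`. -/
def IsPermOf {α : Type*} [DecidableEq α] (p : List α) (s : Finset α) : Prop :=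
  p.Nodup ∧ p.toFinset = s

/-- Benefit of a solution of the tree (caterpillar) instance `T` with `m`
internal vertices `r_1, …, r_m` (with permutations `p 0, …, p (m-1)`) and `m`
leaves `w_1, …, w_m` (with permutations `q 0, …, q (m-1)`): the sum over the
edges `r_i r_{i+1}` and `r_i w_i` of the longest-common-prefix lengths. -/
def treeBenefit {α : Type*} [DecidableEq α] (m : ℕ) (p q : ℕ → List α) : ℕ :=
  (∑ i ∈ Finset.range (m - 1), lcp (p i) (p (i + 1)))
    + ∑ i ∈ Finset.range m, lcp (p i) (q i)

/-- Benefit of a solution of the star instance `S` with root permutation `pr`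
and leaf permutations `q 0, …, q (m-1)`. -/
def starBenefit {α : Type*} [DecidableEq α] (m : ℕ) (pr : List α)
    (q : ℕ → List α) : ℕ :=
  ∑ i ∈ Finset.range m, lcp pr (q i)

set_option linter.unusedSectionVars false
namespace Caux
variable {α : Type*} [DecidableEq α]

theorem lcp_le_length_left : ∀ p q : List α, lcp p q ≤ p.length
  | [], _ => by simp [lcp]
  | _ :: _, [] => by simp [lcp]
  | a :: p, b :: q => by
    simp only [lcp, List.length_cons]
    split
    · exact Nat.succ_le_succ (lcp_le_length_left p q)
    · exact Nat.zero_le _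

theorem lcp_self : ∀ p : List α, lcp p p = p.length
  | [] => by simp [lcp]
  | a :: p => by simp [lcp, lcp_self p]

theorem take_lcp_eq : ∀ p q : List α, p.take (lcp p q) = q.take (lcp p q)
  | [], q => by simp [lcp]
  | _ :: _, [] => by simp [lcp]
  | a :: p, b :: q => by
    by_cases h : a = b
    · subst h
      simp only [lcp, eq_self_iff_true, if_true, List.take_succ_cons, take_lcp_eq p q]
    · simp [lcp, h]

theorem le_lcp : ∀ (k : ℕ) (p q : List α), k ≤ p.length → k ≤ q.length →
    p.take k = q.take k → k ≤ lcp p q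
  | 0, _, _, _, _, _ => Nat.zero_le _
  | k + 1, [], _, h, _, _ => by simp at h
  | k + 1, _ :: _, [], _, h, _ => by simp at h
  | k + 1, a :: p, b :: q, h1, h2, h3 => by
    simp only [List.take_succ_cons, List.cons.injEq] at h3
    obtain ⟨rfl, h3⟩ := h3
    simp only [lcp, if_pos rfl]
    exact Nat.succ_le_succ (le_lcp k p q (by simpa using h1) (by simpa using h2) h3)

theorem length_takeWhile_append_ge (P : α → Bool) :
    ∀ x y : List α, (x.takeWhile P).length ≤ ((x ++ y).takeWhile P).length
  | [], y => by simp
  | a :: x, y => by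
    by_cases h : P a
    · simp only [List.takeWhile_cons, h, if_true, List.cons_append, List.length_cons]
      exact Nat.succ_le_succ (length_takeWhile_append_ge P x y)
    · simp [List.takeWhile_cons, h]

theorem le_length_takeWhile (P : α → Bool) :
    ∀ (k : ℕ) (l : List α), k ≤ l.length → (∀ x ∈ l.take k, P x) →
    k ≤ (l.takeWhile P).length
  | 0, _, _, _ => Nat.zero_le _
  | k + 1, [], h, _ => by simp at h
  | k + 1, a :: l, h, hP => by
    have ha : P a := hP a (by simp [List.take_succ_cons])
    rw [List.takeWhile_cons, if_pos ha]
    simp only [List.length_cons]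
    refine Nat.succ_le_succ (le_length_takeWhile P k l (by simpa using h) ?_)
    intro x hx
    exact hP x (by simp only [List.take_succ_cons, List.mem_cons]; exact Or.inr hx)

theorem takeWhile_take (P : α → Bool) :
    ∀ (n : ℕ) (l : List α), (l.take n).takeWhile P = (l.takeWhile P).take n
  | 0, l => by simp
  | n + 1, [] => by simp
  | n + 1, a :: l => by
    by_cases h : P a
    · simp only [List.take_succ_cons, List.takeWhile_cons, h, if_true, takeWhile_take P n l]
    · simp [List.take_succ_cons, List.takeWhile_cons, h]

theorem lcp_le_takeWhile (P : α → Bool) (p q : List α) (hq : ∀ x ∈ q, P x) :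
    lcp p q ≤ (p.takeWhile P).length := by
  refine le_length_takeWhile P (lcp p q) p (lcp_le_length_left p q) ?_
  intro x hx
  rw [take_lcp_eq p q] at hx
  exact hq x (List.take_subset _ _ hx)

/-- Run length: length of the maximal prefix of `l` inside `s`. -/
def runLen (l : List α) (s : Finset α) : ℕ :=
  (l.takeWhile (fun x => decide (x ∈ s))).length

theorem lcp_le_runLen {p q : List α} {s : Finset α} (hq : ∀ x ∈ q, x ∈ s) :
    lcp p q ≤ runLen p s :=
  lcp_le_takeWhile _ p q fun x hx => decide_eq_true (hq x hx)

theorem runLen_append_ge (x y : List α) (s : Finset α) :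
    runLen x s ≤ runLen (x ++ y) s :=
  length_takeWhile_append_ge _ x y

theorem runLen_take (k : ℕ) (l : List α) (s : Finset α) :
    runLen (l.take k) s = min k (runLen l s) := by
  unfold runLen
  rw [takeWhile_take, List.length_take]

theorem runLen_le_card {l : List α} {s ar L : Finset α}
    (hnd : l.Nodup) (hss : l.toFinset ⊆ ar ∪ L) (hsL : ∀ x ∈ L, x ∉ s) :
    runLen l s ≤ ar.card := by
  set tw := l.takeWhile (fun x => decide (x ∈ s)) with htw
  have hsub : tw.Sublist l := (List.takeWhile_prefix _).sublist
  have hnd' : tw.Nodup := hsub.nodup hnd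
  have hss' : tw.toFinset ⊆ ar := by
    intro x hx
    rw [List.mem_toFinset] at hx
    have hxs : x ∈ s := by
      have := List.mem_takeWhile_imp hx
      exact of_decide_eq_true this
    have hxl : x ∈ ar ∪ L := hss (List.mem_toFinset.2 (hsub.subset hx))
    rcases Finset.mem_union.1 hxl with h | h
    · exact h
    · exact absurd hxs (hsL x h)
  calc runLen l s = tw.toFinset.card := (List.toFinset_card_of_nodup hnd').symm
    _ ≤ ar.card := Finset.card_le_card hss'

end Caux
open Caux


/-- Caterpillar construction with `|L| > m·|a_r|`: there exists an optimal
solution of the tree instance `T` in which all internal vertices are assigned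
one identical permutation `p0` of `A = ar ∪ L`, and in `p0` every element of
`ar` occurs before every element of `L` (so the first `|ar|` entries of `p0`
are exactly the elements of `ar`). -/
theorem stmt7 {α : Type*} [DecidableEq α] (m : ℕ) (ar L : Finset α)
    (a : ℕ → Finset α)
    (hdisj : ∀ x ∈ L, x ∉ ar ∧ ∀ i < m, x ∉ a i)
    (hL : m * ar.card < L.card) :
    ∃ (p0 : List α) (q : ℕ → List α),
      IsPermOf p0 (ar ∪ L) ∧
      (∀ i < m, IsPermOf (q i) (a i)) ∧
      (∀ p' q' : ℕ → List α, (∀ i < m, IsPermOf (p' i) (ar ∪ L)) →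
        (∀ i < m, IsPermOf (q' i) (a i)) →
        treeBenefit m p' q' ≤ treeBenefit m (fun _ => p0) q) ∧
      (∀ x ∈ ar, ∀ y ∈ L, p0.idxOf x < p0.idxOf y) ∧
      (p0.take ar.card).toFinset = ar := by
  classical
  set t := ar.card with ht
  set N := (ar ∪ L).card with hNdef
  have hdisj1 : ∀ x ∈ L, x ∉ ar := fun x hx => (hdisj x hx).1
  have hdisj2 : ∀ i < m, ∀ x ∈ a i, x ∉ L := by
    intro i hi x hx hxL
    exact (hdisj x hxL).2 i hi hx
  have hDisj : Disjoint ar L := by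
    rw [Finset.disjoint_right]
    exact fun {x} hx => hdisj1 x hx
  have hN : N = t + L.card := Finset.card_union_of_disjoint hDisj
  -- choose the best ordering of ar
  have hne : ar.toList.permutations ≠ [] := by
    intro h
    have h2 : ar.toList ∈ ar.toList.permutations := List.mem_permutations.2 (List.Perm.refl _)
    rw [h] at h2
    simp at h2
  obtain ⟨b, hb⟩ : ∃ b, ar.toList.permutations.argmax
      (fun l => ∑ i ∈ Finset.range m, runLen l (a i)) = some b := by
    rcases Option.eq_none_or_eq_some (ar.toList.permutations.argmax
      (fun l => ∑ i ∈ Finset.range m, runLen l (a i))) with h | h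
    · exact absurd (List.argmax_eq_none.1 h) hne
    · exact h
  have hbperm : b.Perm ar.toList := List.perm_of_mem_permutations (List.argmax_mem hb)
  have hbmax : ∀ l, l.Perm ar.toList →
      ∑ i ∈ Finset.range m, runLen l (a i) ≤ ∑ i ∈ Finset.range m, runLen b (a i) :=
    fun l hl => List.le_of_mem_argmax (f := fun l => ∑ i ∈ Finset.range m, runLen l (a i)) (List.mem_permutations.2 hl) hb
  have hbnd : b.Nodup := hbperm.nodup_iff.2 ar.nodup_toList
  have hbfs : b.toFinset = ar := by
    rw [List.toFinset_eq_of_perm _ _ hbperm, Finset.toList_toFinset]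
  have hblen : b.length = t := by rw [hbperm.length_eq, Finset.length_toList]
  set p0 : List α := b ++ L.toList with hp0def
  have hp0nd : p0.Nodup := by
    rw [hp0def, List.nodup_append]
    refine ⟨hbnd, L.nodup_toList, ?_⟩
    intro x hxb y hxL hxy
    rw [← hxy] at hxL
    exact hdisj1 x (Finset.mem_toList.1 hxL) (hbfs ▸ List.mem_toFinset.2 hxb)
  have hp0fs : p0.toFinset = ar ∪ L := by
    rw [hp0def, List.toFinset_append, hbfs, Finset.toList_toFinset]
  have hp0len : p0.length = N := by
    rw [hNdef, ← hp0fs, List.toFinset_card_of_nodup hp0nd]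
  -- leaf permutations
  set q : ℕ → List α := fun i =>
    p0.takeWhile (fun x => decide (x ∈ a i)) ++
      (a i \ (p0.takeWhile (fun x => decide (x ∈ a i))).toFinset).toList with hqdef
  have htwsub : ∀ i, (p0.takeWhile (fun x => decide (x ∈ a i))).toFinset ⊆ a i := by
    intro i x hx
    rw [List.mem_toFinset] at hx
    have h2 := List.mem_takeWhile_imp (p := fun y => decide (y ∈ a i)) (l := p0) hx
    exact of_decide_eq_true h2
  have hq : ∀ i, IsPermOf (q i) (a i) := by
    intro i
    set tw := p0.takeWhile (fun x => decide (x ∈ a i)) with htw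
    have htwnd : tw.Nodup := ((List.takeWhile_prefix _).sublist).nodup hp0nd
    constructor
    · rw [hqdef]
      simp only
      rw [List.nodup_append]
      refine ⟨htwnd, Finset.nodup_toList _, ?_⟩
      intro x hx y hx2 hxy
      rw [← hxy] at hx2
      rw [Finset.mem_toList, Finset.mem_sdiff] at hx2
      exact hx2.2 (List.mem_toFinset.2 hx)
    · rw [hqdef]
      simp only
      rw [List.toFinset_append, Finset.toList_toFinset]
      exact Finset.union_sdiff_of_subset (htwsub i)
  -- benefit of the chosen solution
  have hlcpq : ∀ i, runLen p0 (a i) ≤ lcp p0 (q i) := by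
    intro i
    set tw := p0.takeWhile (fun x => decide (x ∈ a i)) with htw
    have hpre : tw <+: p0 := List.takeWhile_prefix _
    have hqi : q i = tw ++ (a i \ tw.toFinset).toList := rfl
    refine le_lcp tw.length p0 (q i) hpre.length_le ?_ ?_
    · rw [hqi]
      simp only [List.length_append]
      exact Nat.le_add_right _ _
    · obtain ⟨r, hr⟩ := hpre
      rw [hqi, List.take_left, ← hr, List.take_left]
  have hRHS : (m - 1) * N + ∑ i ∈ Finset.range m, runLen p0 (a i) ≤
      treeBenefit m (fun _ => p0) q := by
    unfold treeBenefit
    refine add_le_add ?_ (Finset.sum_le_sum fun i _ => hlcpq i)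
    rw [Finset.sum_congr rfl (fun i _ => (lcp_self p0).trans hp0len)]
    rw [Finset.sum_const, Finset.card_range, smul_eq_mul]
  refine ⟨p0, q, ⟨hp0nd, hp0fs⟩, fun i _ => hq i, ?_, ?_, ?_⟩
  · -- optimality
    intro p' q' hp' hq'
    rcases Nat.eq_zero_or_pos m with hm0 | hm
    · subst hm0
      simp [treeBenefit]
    have hleaf : ∀ i < m, lcp (p' i) (q' i) ≤ runLen (p' i) (a i) := by
      intro i hi
      refine lcp_le_runLen fun x hx => ?_
      rw [← (hq' i hi).2]
      exact List.mem_toFinset.2 hx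
    have hrunle : ∀ i < m, runLen (p' i) (a i) ≤ t := by
      intro i hi
      exact runLen_le_card (hp' i hi).1 (le_of_eq (hp' i hi).2)
        (fun x hx => (hdisj x hx).2 i hi)
    have hlen' : ∀ i < m, (p' i).length = N := by
      intro i hi
      rw [hNdef, ← (hp' i hi).2, List.toFinset_card_of_nodup (hp' i hi).1]
    by_cases hA : ∀ j < m - 1, t + 1 ≤ lcp (p' j) (p' (j + 1))
    · -- all internal lcps are large: common prefix argument
      set c := (p' 0).take (t + 1) with hc
      have htake : ∀ i < m, (p' i).take (t + 1) = c := by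
        intro i
        induction i with
        | zero => intro _; rfl
        | succ k ih =>
          intro hk
          have hk' : k < m := by omega
          have hedge : t + 1 ≤ lcp (p' k) (p' (k + 1)) := hA k (by omega)
          have h2 : (p' k).take (t + 1) = (p' (k + 1)).take (t + 1) := by
            have h3 := congrArg (List.take (t + 1)) (take_lcp_eq (p' k) (p' (k + 1)))
            rwa [List.take_take, List.take_take, Nat.min_eq_left hedge] at h3
          rw [← h2, ih hk']
      have hrunc : ∀ i < m, runLen (p' i) (a i) = runLen c (a i) := by
        intro i hi
        rw [← htake i hi, runLen_take, Nat.min_eq_right]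
        exact le_trans (hrunle i hi) (Nat.le_succ t)
      -- the candidate ordering obtained from c
      set f := c.filter (fun x => decide (x ∉ L)) with hf
      have hcnd : c.Nodup := ((List.take_prefix _ _).sublist).nodup (hp' 0 hm).1
      have hfnd : f.Nodup := List.filter_sublist.nodup hcnd
      have hffs : f.toFinset ⊆ ar := by
        intro x hx
        rw [List.mem_toFinset, hf, List.mem_filter] at hx
        have hxar : x ∈ ar ∪ L := by
          rw [← (hp' 0 hm).2]
          exact List.mem_toFinset.2 ((List.take_subset _ _) hx.1)
        have hxnL : x ∉ L := of_decide_eq_true hx.2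
        rcases Finset.mem_union.1 hxar with h | h
        · exact h
        · exact absurd h hxnL
      set bc := f ++ (ar \ f.toFinset).toList with hbc
      have hbcnd : bc.Nodup := by
        rw [hbc, List.nodup_append]
        refine ⟨hfnd, Finset.nodup_toList _, ?_⟩
        intro x hx y hx2 hxy
        rw [← hxy] at hx2
        rw [Finset.mem_toList, Finset.mem_sdiff] at hx2
        exact hx2.2 (List.mem_toFinset.2 hx)
      have hbcfs : bc.toFinset = ar := by
        rw [hbc, List.toFinset_append, Finset.toList_toFinset]
        exact Finset.union_sdiff_of_subset hffs
      have hbcperm : bc.Perm ar.toList :=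
        List.perm_of_nodup_nodup_toFinset_eq hbcnd ar.nodup_toList
          (by rw [hbcfs, Finset.toList_toFinset])
      have hcbc : ∀ i < m, runLen c (a i) ≤ runLen bc (a i) := by
        intro i hi
        have h1 : runLen c (a i) ≤ runLen f (a i) := by
          set tw := c.takeWhile (fun x => decide (x ∈ a i)) with htw
          have hpre : tw <+: c := List.takeWhile_prefix _
          obtain ⟨r, hr⟩ := hpre
          have htwf : f.take tw.length = tw := by
            have htwall : tw.filter (fun x => decide (x ∉ L)) = tw := by
              refine List.filter_eq_self.2 fun x hx => ?_
              refine decide_eq_true ?_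
              rw [htw] at hx
              have h2 := List.mem_takeWhile_imp (p := fun y => decide (y ∈ a i)) (l := c) hx
              exact hdisj2 i hi x (of_decide_eq_true h2)
            rw [hf, ← hr, List.filter_append, htwall, List.take_left]
          refine le_length_takeWhile _ tw.length f ?_ ?_
          · calc tw.length = (f.take tw.length).length := by rw [htwf]
              _ ≤ f.length := by rw [List.length_take]; exact Nat.min_le_right _ _
          · intro x hx
            rw [htwf, htw] at hx
            exact List.mem_takeWhile_imp (p := fun y => decide (y ∈ a i)) (l := c) hx
        calc runLen c (a i) ≤ runLen f (a i) := h1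
          _ ≤ runLen bc (a i) := by rw [hbc]; exact runLen_append_ge _ _ _
      have hsum : ∑ i ∈ Finset.range m, runLen c (a i) ≤
          ∑ i ∈ Finset.range m, runLen p0 (a i) := by
        calc ∑ i ∈ Finset.range m, runLen c (a i)
            ≤ ∑ i ∈ Finset.range m, runLen bc (a i) :=
              Finset.sum_le_sum fun i hi => hcbc i (Finset.mem_range.1 hi)
          _ ≤ ∑ i ∈ Finset.range m, runLen b (a i) := hbmax bc hbcperm
          _ ≤ ∑ i ∈ Finset.range m, runLen p0 (a i) :=
              Finset.sum_le_sum fun i _ => by rw [hp0def]; exact runLen_append_ge _ _ _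
      have hInt : ∑ j ∈ Finset.range (m - 1), lcp (p' j) (p' (j + 1)) ≤ (m - 1) * N := by
        calc ∑ j ∈ Finset.range (m - 1), lcp (p' j) (p' (j + 1))
            ≤ ∑ j ∈ Finset.range (m - 1), N := by
              refine Finset.sum_le_sum fun j hj => ?_
              have hj' : j < m := by have := Finset.mem_range.1 hj; omega
              calc lcp (p' j) (p' (j + 1)) ≤ (p' j).length := lcp_le_length_left _ _
                _ = N := hlen' j hj'
          _ = (m - 1) * N := by rw [Finset.sum_const, Finset.card_range, smul_eq_mul]
      have hLeaf : ∑ i ∈ Finset.range m, lcp (p' i) (q' i) ≤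
          ∑ i ∈ Finset.range m, runLen c (a i) := by
        refine Finset.sum_le_sum fun i hi => ?_
        have hi' := Finset.mem_range.1 hi
        calc lcp (p' i) (q' i) ≤ runLen (p' i) (a i) := hleaf i hi'
          _ = runLen c (a i) := hrunc i hi'
      calc treeBenefit m p' q' ≤ (m - 1) * N + ∑ i ∈ Finset.range m, runLen c (a i) :=
            add_le_add hInt hLeaf
        _ ≤ (m - 1) * N + ∑ i ∈ Finset.range m, runLen p0 (a i) :=
            Nat.add_le_add_left hsum _
        _ ≤ treeBenefit m (fun _ => p0) q := hRHS
    · -- some internal lcp is small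
      push_neg at hA
      obtain ⟨j, hj, hjsmall⟩ := hA
      have hjt : lcp (p' j) (p' (j + 1)) ≤ t := by omega
      have hm2 : 2 ≤ m := by omega
      have hjmem : j ∈ Finset.range (m - 1) := Finset.mem_range.2 hj
      have hInt : ∑ k ∈ Finset.range (m - 1), lcp (p' k) (p' (k + 1)) ≤
          (m - 2) * N + t := by
        rw [← Finset.sum_erase_add _ _ hjmem]
        refine add_le_add ?_ hjt
        calc ∑ k ∈ (Finset.range (m - 1)).erase j, lcp (p' k) (p' (k + 1))
            ≤ ((Finset.range (m - 1)).erase j).card • N := by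
              refine Finset.sum_le_card_nsmul _ _ _ fun k hk => ?_
              have hk' : k < m := by
                have := Finset.mem_range.1 (Finset.mem_of_mem_erase hk); omega
              calc lcp (p' k) (p' (k + 1)) ≤ (p' k).length := lcp_le_length_left _ _
                _ = N := hlen' k hk'
          _ = (m - 2) * N := by
              rw [Finset.card_erase_of_mem hjmem, Finset.card_range, smul_eq_mul]
              have h12 : m - 1 - 1 = m - 2 := by omega
              rw [h12]
      have hLeaf : ∑ i ∈ Finset.range m, lcp (p' i) (q' i) ≤ m * t := by
        calc ∑ i ∈ Finset.range m, lcp (p' i) (q' i)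
            ≤ (Finset.range m).card • t := by
              refine Finset.sum_le_card_nsmul _ _ _ fun i hi => ?_
              have hi' := Finset.mem_range.1 hi
              exact le_trans (hleaf i hi') (hrunle i hi')
          _ = m * t := by rw [Finset.card_range, smul_eq_mul]
      have hm1 : m - 1 = (m - 2) + 1 := by omega
      calc treeBenefit m p' q' ≤ ((m - 2) * N + t) + m * t := add_le_add hInt hLeaf
        _ ≤ ((m - 2) * N + t) + L.card := by
            refine Nat.add_le_add_left ?_ _
            exact le_of_lt hL
        _ = (m - 2) * N + (t + L.card) := by ring
        _ = (m - 2) * N + N := by rw [hN]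
        _ = (m - 1) * N := by rw [hm1, Nat.succ_mul]
        _ ≤ (m - 1) * N + ∑ i ∈ Finset.range m, runLen p0 (a i) := Nat.le_add_right _ _
        _ ≤ treeBenefit m (fun _ => p0) q := hRHS
  · -- ar before L in p0
    intro x hx y hy
    have hxb : x ∈ b := List.mem_toFinset.1 (hbfs ▸ hx)
    have hyb : y ∉ b := fun h => hdisj1 y hy (hbfs ▸ List.mem_toFinset.2 h)
    rw [hp0def, List.idxOf_append_of_mem hxb, List.idxOf_append_of_notMem hyb]
    calc List.idxOf x b < b.length := List.idxOf_lt_length_iff.2 hxb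
      _ ≤ b.length + List.idxOf y L.toList := Nat.le_add_right _ _
  · -- first t entries of p0 are ar
    rw [hp0def, ← hblen, List.take_left]
    exact hbfs
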